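/- The partial derivative with respect to μ of f(μ, ε) = Φ(μ/2 - ε/μ) - e^ε Φ(-μ/2 - ε/μ) equals φ(μ/2 - ε/μ), where φ is the standard normal density; in particular this derivative is always positive for μ > 0. -/

import Mathlib

noncomputable def stdNormalPDF (x : ℝ) : ℝ :=
  (Real.sqrt (2 * Real.pi))⁻¹ * Real.exp (-x ^ 2 / 2)

noncomputable def stdNormalCDF (x : ℝ) : ℝ := ∫ t in Set.Iic x, stdNormalPDF t

noncomputable def gaussF (μ ε : ℝ) : ℝ :=
  stdNormalCDF (μ / 2 - ε / μ) - Real.exp ε * stdNormalCDF (-μ / 2 - ε / μ)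

/-! The derivative of `Φ(μ/2 - ε/μ)` is `φ(μ/2 - ε/μ) (1/2 + ε/μ²)` and that of
`e^ε Φ(-μ/2 - ε/μ)` is `e^ε φ(-μ/2 - ε/μ) (-1/2 + ε/μ²)`. The two arguments differ by `μ`
and sum to `-2ε/μ`, so the difference of their squares is `-2ε`: hence
`e^ε φ(-μ/2 - ε/μ) = φ(μ/2 - ε/μ)`, and the terms in `ε/μ²` cancel, leaving `φ(μ/2 - ε/μ)`. -/

open MeasureTheory Set

theorem hasDerivAt_integral_Iic {E : Type*} [NormedAddCommGroup E] [NormedSpace ℝ E]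
    [CompleteSpace E] {f : ℝ → E} (hf : Continuous f) (hfi : Integrable f) (x : ℝ) :
    HasDerivAt (fun y => ∫ t in Iic y, f t) (f x) x := by
  have integral_Iic_eq (y : ℝ) : ∫ t in Iic y, f t = (∫ t in Iic 0, f t) + ∫ t in (0 : ℝ)..y, f t := by
    rw [← intervalIntegral.integral_Iic_sub_Iic hfi.integrableOn hfi.integrableOn,
      add_sub_cancel]
  rw [funext integral_Iic_eq]
  exact ((hf.integral_hasStrictDerivAt 0 x).hasDerivAt).const_add _

theorem stdNormalPDF_pos (x : ℝ) : 0 < stdNormalPDF x := by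
  unfold stdNormalPDF
  positivity

theorem continuous_stdNormalPDF : Continuous stdNormalPDF := by
  unfold stdNormalPDF
  fun_prop

theorem integrable_stdNormalPDF : Integrable stdNormalPDF := by
  refine ((integrable_exp_neg_mul_sq (b := 1 / 2) (by norm_num)).const_mul
    (Real.sqrt (2 * Real.pi))⁻¹).congr (Filter.Eventually.of_forall fun x => ?_)
  simp only [stdNormalPDF]
  ring_nf

theorem hasDerivAt_stdNormalCDF (x : ℝ) : HasDerivAt stdNormalCDF (stdNormalPDF x) x :=
  hasDerivAt_integral_Iic continuous_stdNormalPDF integrable_stdNormalPDF x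

theorem stdNormalPDF_eq_exp_mul (a b : ℝ) :
    stdNormalPDF a = Real.exp ((b ^ 2 - a ^ 2) / 2) * stdNormalPDF b := by
  simp only [stdNormalPDF]
  rw [mul_left_comm, ← Real.exp_add]
  ring_nf

theorem hasDerivAt_mul_sub_div (c ε : ℝ) {x : ℝ} (hx : x ≠ 0) :
    HasDerivAt (fun m => c * m - ε / m) (c + ε / x ^ 2) x := by
  simp only [div_eq_mul_inv]
  exact (((hasDerivAt_id' x).const_mul c).sub ((hasDerivAt_inv hx).const_mul ε)).congr_deriv
    (by ring)

theorem gaussF_hasDerivAt_mu (μ ε : ℝ) (hμ : 0 < μ) :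
    HasDerivAt (fun m => gaussF m ε) (stdNormalPDF (μ / 2 - ε / μ)) μ ∧
      0 < stdNormalPDF (μ / 2 - ε / μ) := by
  refine ⟨?_, stdNormalPDF_pos _⟩
  have hplus : HasDerivAt (fun m => m / 2 - ε / m) (1 / 2 + ε / μ ^ 2) μ := by
    simpa only [one_div_mul_eq_div] using hasDerivAt_mul_sub_div (1 / 2) ε hμ.ne'
  have hminus : HasDerivAt (fun m => -m / 2 - ε / m) (-1 / 2 + ε / μ ^ 2) μ := by
    simpa only [div_mul_eq_mul_div, neg_one_mul] using hasDerivAt_mul_sub_div (-1 / 2) ε hμ.ne'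
  have hpdf : Real.exp ε * stdNormalPDF (-μ / 2 - ε / μ) = stdNormalPDF (μ / 2 - ε / μ) := by
    rw [stdNormalPDF_eq_exp_mul (μ / 2 - ε / μ) (-μ / 2 - ε / μ)]
    congr 2
    field_simp
    ring
  exact (((hasDerivAt_stdNormalCDF _).comp μ hplus).sub
    (((hasDerivAt_stdNormalCDF _).comp μ hminus).const_mul (Real.exp ε))).congr_deriv
    (by linear_combination (1 / 2 - ε / μ ^ 2) * hpdf)
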